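/- For every real number s > 1 there exists a positive real A such that for every odd integer a ≥ A, there are infinitely many even positive integers n with σ_s(an+2) > σ_s((a+1)n+1). -/

import Mathlib

/-!
Take `n = 2j` with `p = (a + 1) n + 1` prime; there are infinitely many such `j` because there
are infinitely many primes `p ≡ 1 [MOD 2(a + 1)]`. Then `σ_s(p) = 1 + p^s`, while
`an + 2 = 2k` with `k = aj + 1` has the divisors `k` and `2k`, so `σ_s(an + 2) ≥ k^s + (2k)^s`.
Since `p ≤ (2 + 2/a) k` and `(2 + 2/a)^s → 2^s`, for large `a` we get `p^s ≤ (2k)^s + k^s/2`,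
and the remaining gap `k^s/2 > 1` holds because `k ≥ 2` and `s > 1`.
-/

open Finset Filter Topology

noncomputable def sigmaR (s : ℝ) (n : ℕ) : ℝ := ∑ d ∈ n.divisors, (d : ℝ) ^ s

lemma sigmaR_prime (s : ℝ) {p : ℕ} (hp : p.Prime) : sigmaR s p = 1 + (p : ℝ) ^ s := by
  rw [sigmaR, hp.divisors, sum_pair hp.one_lt.ne]
  simp

lemma rpow_add_rpow_le_sigmaR (s : ℝ) {d m : ℕ} (hdm : d ∣ m) (hne : d ≠ m) (hm : m ≠ 0) :
    (d : ℝ) ^ s + (m : ℝ) ^ s ≤ sigmaR s m := by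
  rw [← sum_pair (f := fun d : ℕ => (d : ℝ) ^ s) hne]
  refine sum_le_sum_of_subset_of_nonneg (fun e he => ?_) fun e _ _ => by positivity
  rcases mem_insert.1 he with rfl | he
  · exact Nat.mem_divisors.2 ⟨hdm, hm⟩
  · exact (mem_singleton.1 he) ▸ Nat.mem_divisors_self m hm

lemma sigmaR_prime_lt_sigmaR_two_mul {s : ℝ} (hs : 1 < s) {p k : ℕ} (hp : p.Prime)
    (hk : 2 ≤ k) (hpk : (p : ℝ) ^ s ≤ ((2 * k : ℕ) : ℝ) ^ s + (k : ℝ) ^ s / 2) :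
    sigmaR s p < sigmaR s (2 * k) := by
  have hks : 2 < (k : ℝ) ^ s := calc
    (2 : ℝ) = 2 ^ (1 : ℝ) := (Real.rpow_one 2).symm
    _ < 2 ^ s := Real.rpow_lt_rpow_of_exponent_lt one_lt_two hs
    _ ≤ (k : ℝ) ^ s := Real.rpow_le_rpow zero_le_two (mod_cast hk) (by linarith)
  calc sigmaR s p = 1 + (p : ℝ) ^ s := sigmaR_prime s hp
    _ < (k : ℝ) ^ s + ((2 * k : ℕ) : ℝ) ^ s := by linarith
    _ ≤ sigmaR s (2 * k) :=
      rpow_add_rpow_le_sigmaR s (dvd_mul_left k 2) (by omega) (by omega)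

lemma eventually_two_add_two_div_rpow_lt (s : ℝ) :
    ∀ᶠ x : ℝ in atTop, (2 + 2 / x) ^ s < 2 ^ s + 1 / 2 := by
  have h : Tendsto (fun x : ℝ => (2 + 2 / x) ^ s) atTop (𝓝 ((2 + 0) ^ s)) :=
    (tendsto_const_nhds.add (tendsto_const_nhds.div_atTop tendsto_id)).rpow_const
      (Or.inl (by norm_num))
  exact h.eventually_lt_const (by norm_num)

lemma sigmaR_lt_of_prime {s : ℝ} (hs : 1 < s) {a j : ℕ} (ha : 1 ≤ a)
    (hsmall : (2 + 2 / (a : ℝ)) ^ s ≤ 2 ^ s + 1 / 2) (hp : ((a + 1) * (2 * j) + 1).Prime) :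
    sigmaR s ((a + 1) * (2 * j) + 1) < sigmaR s (a * (2 * j) + 2) := by
  have hj : j ≠ 0 := by rintro rfl; exact Nat.not_prime_one hp
  set k := a * j + 1
  have hk : 2 ≤ k := by have := Nat.mul_le_mul ha (Nat.one_le_iff_ne_zero.2 hj); omega
  have hpk : (((a + 1) * (2 * j) + 1 : ℕ) : ℝ) ≤ k * (2 + 2 / a) := by
    have ha0 : (a : ℝ) ≠ 0 := by positivity
    have : (k : ℝ) * (2 + 2 / a) = (a + 1) * (2 * j) + 2 + 2 / a := by
      simp only [k]; push_cast; field_simp; ring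
    rw [this]; push_cast
    linarith [show (0 : ℝ) ≤ 2 / a by positivity]
  rw [show a * (2 * j) + 2 = 2 * k by ring]
  refine sigmaR_prime_lt_sigmaR_two_mul hs hp hk ?_
  calc (((a + 1) * (2 * j) + 1 : ℕ) : ℝ) ^ s ≤ ((k : ℝ) * (2 + 2 / a)) ^ s :=
        Real.rpow_le_rpow (by positivity) hpk (by linarith)
    _ = (k : ℝ) ^ s * (2 + 2 / a) ^ s := Real.mul_rpow (by positivity) (by positivity)
    _ ≤ (k : ℝ) ^ s * (2 ^ s + 1 / 2) := by gcongr
    _ = ((2 * k : ℕ) : ℝ) ^ s + (k : ℝ) ^ s / 2 := by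
        rw [Nat.cast_mul, Real.mul_rpow (by norm_num) (by positivity)]
        push_cast
        ring

lemma infinite_setOf_prime_mul_add_one {q : ℕ} (hq : 2 ≤ q) :
    {j : ℕ | (q * j + 1).Prime}.Infinite := by
  refine Set.infinite_of_forall_exists_gt fun N => ?_
  obtain ⟨p, hp, hNp, hp1⟩ := Nat.exists_prime_gt_modEq_one (k := q) (q * N + 1) (by omega)
  have hpq : p = q * (p / q) + 1 := by
    have hmod : p % q = 1 := by rwa [Nat.ModEq, Nat.mod_eq_of_lt hq] at hp1
    have := Nat.div_add_mod p q
    omega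
  refine ⟨p / q, show (q * (p / q) + 1).Prime from hpq ▸ hp, ?_⟩
  by_contra! h
  have := Nat.mul_le_mul_left q h
  omega

/-- For every real `s > 1` there is a positive real `A` such that for every odd integer
`a ≥ A` there are infinitely many even positive integers `n` with
`σ_s(an+2) > σ_s((a+1)n+1)`. -/
theorem stmt_2 (s : ℝ) (hs : 1 < s) :
    ∃ A : ℝ, 0 < A ∧ ∀ a : ℕ, Odd a → A ≤ (a : ℝ) →
      {n : ℕ | 0 < n ∧ Even n ∧
        sigmaR s ((a + 1) * n + 1) < sigmaR s (a * n + 2)}.Infinite := by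
  obtain ⟨A, hA⟩ := eventually_atTop.1 (eventually_two_add_two_div_rpow_lt s)
  refine ⟨max A 1, by positivity, fun a _ ha => ?_⟩
  have ha1 : 1 ≤ a := by exact_mod_cast le_of_max_le_right ha
  have hsmall := (hA a (le_of_max_le_left ha)).le
  have hprimes := infinite_setOf_prime_mul_add_one (q := 2 * (a + 1)) (by omega)
  refine ((hprimes.image (mul_right_injective₀ two_ne_zero).injOn).mono ?_)
  rintro _ ⟨j, hj : (2 * (a + 1) * j + 1).Prime, rfl⟩
  have hp : ((a + 1) * (2 * j) + 1).Prime := by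
    convert hj using 2; ring
  have hj0 : j ≠ 0 := by rintro rfl; exact Nat.not_prime_one hp
  exact ⟨Nat.pos_of_ne_zero (mul_ne_zero two_ne_zero hj0), even_two_mul j,
    sigmaR_lt_of_prime hs ha1 hsmall hp⟩
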